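/- Let G be a strongly connected signed digraph. Then G is structurally balanced if and only if the improved Laplacian potential function Φ_e is positive semidefinite with null set exactly span{D·1_n}; that is, if and only if Φ_e(x) ≥ 0 for all x ∈ ℝⁿ and there exists a gauge transformation D with every entry of D·A·D nonnegative such that for every x ∈ ℝⁿ, Φ_e(x) = 0 implies x = c·D·1_n for some c ∈ ℝ, where 1_n is the all-ones vector in ℝⁿ. -/

import Mathlib

open Matrix BigOperators Filter

/-- In-degree of node `i`: sum of absolute values of the `i`-th row of `A`. -/
noncomputable def inDeg {n : ℕ} (A : Matrix (Fin n) (Fin n) ℝ) (i : Fin n) : ℝ := ∑ j, |A i j|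

/-- Laplacian `L = Δ − A` of the signed digraph with adjacency matrix `A`. -/
noncomputable def lapOf {n : ℕ} (A : Matrix (Fin n) (Fin n) ℝ) : Matrix (Fin n) (Fin n) ℝ :=
  Matrix.diagonal (inDeg A) - A

/-- Laplacian `L̄ = Δ − Ā` of the induced unsigned digraph. -/
noncomputable def lapBar {n : ℕ} (A : Matrix (Fin n) (Fin n) ℝ) : Matrix (Fin n) (Fin n) ℝ :=
  Matrix.diagonal (inDeg A) - Matrix.of (fun i j => |A i j|)

/-- `det(L̄_ii)`: determinant of `L̄` with its `i`-th row and column removed. -/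
noncomputable def minorDet {n : ℕ} (A : Matrix (Fin n) (Fin n) ℝ) (i : Fin n) : ℝ :=
  Matrix.det ((lapBar A).submatrix (fun k : {j : Fin n // j ≠ i} => (k : Fin n))
    (fun k : {j : Fin n // j ≠ i} => (k : Fin n)))

/-- `W = diag(det(L̄_11), …, det(L̄_nn))`. -/
noncomputable def Wmat {n : ℕ} (A : Matrix (Fin n) (Fin n) ℝ) : Matrix (Fin n) (Fin n) ℝ :=
  Matrix.diagonal (minorDet A)

/-- Mirror adjacency matrix `Â = (W·A + Aᵀ·W)/2`. -/
noncomputable def mirrorAdj {n : ℕ} (A : Matrix (Fin n) (Fin n) ℝ) : Matrix (Fin n) (Fin n) ℝ :=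
  (1/2 : ℝ) • (Wmat A * A + Aᵀ * Wmat A)

/-- Mirror Laplacian `L̂ = (W·L + Lᵀ·W)/2`. -/
noncomputable def mirrorLap {n : ℕ} (A : Matrix (Fin n) (Fin n) ℝ) : Matrix (Fin n) (Fin n) ℝ :=
  (1/2 : ℝ) • (Wmat A * lapOf A + (lapOf A)ᵀ * Wmat A)

/-- `(j, i)` is a directed edge when `a_ij ≠ 0`; strong connectivity: a directed
path between every ordered pair of distinct nodes. -/
def StronglyConnected {n : ℕ} (A : Matrix (Fin n) (Fin n) ℝ) : Prop :=
  ∀ i j : Fin n, i ≠ j → Relation.TransGen (fun u v => A v u ≠ 0) i j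

/-- `σ` is the diagonal of a gauge transformation: each entry is `±1`. -/
def IsGauge {n : ℕ} (σ : Fin n → ℝ) : Prop := ∀ i, σ i = 1 ∨ σ i = -1

/-- Structural balance: there is a gauge transformation `D = diag σ` with all entries
of `D·A·D` (entrywise `σ i * A i j * σ j`) nonnegative. -/
def StructBalanced {n : ℕ} (A : Matrix (Fin n) (Fin n) ℝ) : Prop :=
  ∃ σ : Fin n → ℝ, IsGauge σ ∧ ∀ i j, 0 ≤ σ i * A i j * σ j

/-- Improved Laplacian potential function
`Φ_e(x) = Σ_i Σ_j det(L̄_ii)·|a_ij|·(x_i − sgn(a_ij)·x_j)²`. -/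
noncomputable def PhiE {n : ℕ} (A : Matrix (Fin n) (Fin n) ℝ) (x : Fin n → ℝ) : ℝ :=
  ∑ i, ∑ j, minorDet A i * |A i j| * (x i - Real.sign (A i j) * x j) ^ 2

/-!
Every weight `det(L̄_ii)` is positive. The reduced Laplacian `L̄_ii` is weakly diagonally
dominant, and it is nonsingular: a vector vanishing at `i` and annihilated by the other rows of
`L̄` attains its maximum at `i`, because by strong connectivity the set of maximum points
propagates back to `i`. A weakly dominant nonsingular matrix `M` has positive determinant, since
`(1 - s) • 1 + s • M` is strictly dominant for `s < 1` (Gershgorin), so its determinant does not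
change sign on `[0, 1]`.

Hence `Φ_e` is a sum of nonnegative terms, and when `D = diag σ` balances `A`, `Φ_e x = 0` forces
`x_i = sgn(a_ij) x_j = σ_i σ_j x_j` along every edge; so `D x` is constant along edges, hence
constant.
-/

theorem Matrix.det_pos_of_sum_abs_le_diag {m : Type*} [Fintype m] [DecidableEq m]
    (M : Matrix m m ℝ) (hdom : ∀ k, ∑ j ∈ Finset.univ.erase k, |M k j| ≤ M k k)
    (hker : ∀ v, M *ᵥ v = 0 → v = 0) : 0 < M.det := by
  set f : ℝ → ℝ := fun s => ((1 - s) • (1 : Matrix m m ℝ) + s • M).det with hf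
  have hcont : Continuous f := by fun_prop
  have hf0 : f 0 = 1 := by simp [hf]
  have hf1 : f 1 = M.det := by simp [hf]
  have hne : ∀ s ∈ Set.Icc (0 : ℝ) 1, f s ≠ 0 := by
    rintro s ⟨hs0, hs1⟩
    rcases hs1.lt_or_eq with hs1 | rfl
    · refine det_ne_zero_of_sum_row_lt_diag fun k => ?_
      have hoff : ∀ j ∈ Finset.univ.erase k, ‖((1 - s) • (1 : Matrix m m ℝ) + s • M) k j‖
          = s * |M k j| := fun j hj => by
        simp [Matrix.one_apply_ne' (Finset.ne_of_mem_erase hj), abs_of_nonneg hs0]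
      have hdiag : ((1 - s) • (1 : Matrix m m ℝ) + s • M) k k = (1 - s) + s * M k k := by simp
      have hMkk : 0 ≤ M k k := (Finset.sum_nonneg fun j _ => abs_nonneg _).trans (hdom k)
      rw [Finset.sum_congr rfl hoff, ← Finset.mul_sum, hdiag, Real.norm_eq_abs,
        abs_of_pos (by nlinarith : 0 < 1 - s + s * M k k)]
      nlinarith [hdom k]
    · rw [hf1]
      intro h
      obtain ⟨v, hv, hMv⟩ := Matrix.exists_mulVec_eq_zero_iff.mpr h
      exact hv (hker v hMv)
  by_contra! hle
  obtain ⟨s, hs, hfs⟩ := intermediate_value_Icc' zero_le_one hcont.continuousOn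
    ⟨hf1 ▸ hle, hf0 ▸ zero_le_one⟩
  exact hne s hs hfs

theorem Matrix.sum_abs_submatrix_erase_le {m m' : Type*} [Fintype m] [Fintype m'] [DecidableEq m]
    [DecidableEq m'] (M : Matrix m m ℝ) (e : m' ↪ m)
    (hdom : ∀ k, ∑ j ∈ Finset.univ.erase k, |M k j| ≤ M k k) (k : m') :
    ∑ j ∈ Finset.univ.erase k, |M.submatrix e e k j| ≤ M.submatrix e e k k := by
  have hsub : (Finset.univ.erase k).map e ⊆ Finset.univ.erase (e k) := fun j hj => by
    obtain ⟨j, hjk, rfl⟩ := Finset.mem_map.mp hj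
    exact Finset.mem_erase.mpr ⟨e.injective.ne (Finset.ne_of_mem_erase hjk), Finset.mem_univ _⟩
  calc ∑ j ∈ Finset.univ.erase k, |M.submatrix e e k j|
      = ∑ j ∈ (Finset.univ.erase k).map e, |M (e k) j| :=
        (Finset.sum_map (Finset.univ.erase k) e fun j => |M (e k) j|).symm
    _ ≤ ∑ j ∈ Finset.univ.erase (e k), |M (e k) j| :=
      Finset.sum_le_sum_of_subset_of_nonneg hsub fun j _ _ => abs_nonneg _
    _ ≤ M (e k) (e k) := hdom (e k)

theorem IsGauge.sign_eq_mul {n : ℕ} {σ : Fin n → ℝ} (hσ : IsGauge σ) {a : ℝ} {i j : Fin n}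
    (ha : 0 ≤ σ i * a * σ j) (ha0 : a ≠ 0) : Real.sign a = σ i * σ j := by
  rcases hσ i with hi | hi <;> rcases hσ j with hj | hj <;> norm_num [hi, hj] at ha ⊢
  exacts [Real.sign_of_pos (ha.lt_of_ne' ha0), Real.sign_of_neg (ha.lt_of_ne ha0),
    Real.sign_of_neg (ha.lt_of_ne ha0), Real.sign_of_pos (ha.lt_of_ne' ha0)]

section Laplacian

variable {n : ℕ}

theorem lapBar_mulVec_apply (A : Matrix (Fin n) (Fin n) ℝ) (x : Fin n → ℝ) (k : Fin n) :
    (lapBar A *ᵥ x) k = ∑ j, |A k j| * (x k - x j) := by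
  rw [lapBar, Matrix.sub_mulVec, Pi.sub_apply, Matrix.mulVec_diagonal, inDeg, Finset.sum_mul]
  simp only [Matrix.mulVec, dotProduct, Matrix.of_apply, mul_sub, Finset.sum_sub_distrib]

theorem sum_abs_lapBar_erase_le (A : Matrix (Fin n) (Fin n) ℝ) (k : Fin n) :
    ∑ j ∈ Finset.univ.erase k, |lapBar A k j| ≤ lapBar A k k := by
  have hoff : ∀ j ∈ Finset.univ.erase k, |lapBar A k j| = |A k j| := fun j hj => by
    simp [lapBar, Matrix.diagonal_apply_ne _ (Finset.ne_of_mem_erase hj).symm]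
  have hdiag : lapBar A k k = ∑ j ∈ Finset.univ.erase k, |A k j| := by
    rw [lapBar, Matrix.sub_apply, Matrix.diagonal_apply_eq, inDeg, Matrix.of_apply,
      ← Finset.add_sum_erase _ _ (Finset.mem_univ k), add_sub_cancel_left]
  rw [Finset.sum_congr rfl hoff, hdiag]

variable {A : Matrix (Fin n) (Fin n) ℝ}

theorem StronglyConnected.mem_of_backward_closed (hsc : StronglyConnected A)
    {S : Set (Fin n)} (hS : ∀ u v, A v u ≠ 0 → v ∈ S → u ∈ S) {i j : Fin n} (hj : j ∈ S) :
    i ∈ S := by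
  rcases eq_or_ne i j with rfl | hij
  · exact hj
  have hpath := hsc i j hij
  clear hij
  induction hpath with
  | single h => exact hS _ _ h hj
  | tail _ h ih => exact ih (hS _ _ h hj)

theorem StronglyConnected.nonpos_of_lapBar_mulVec_eq_zero (hsc : StronglyConnected A)
    {i : Fin n} {y : Fin n → ℝ} (hyi : y i = 0) (hy : ∀ k ≠ i, (lapBar A *ᵥ y) k = 0)
    (k : Fin n) : y k ≤ 0 := by
  obtain ⟨k₀, -, hk₀⟩ := Finset.exists_max_image Finset.univ y ⟨k, Finset.mem_univ k⟩
  by_contra! hk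
  have hmax : 0 < y k₀ := hk.trans_le (hk₀ k (Finset.mem_univ k))
  -- a vanishing row of `L̄ y` makes `y v` a weighted average of its in-neighbours
  have hspread : ∀ u v, A v u ≠ 0 → v ∈ {w | y w = y k₀} → u ∈ {w | y w = y k₀} := by
    intro u v huv (hv : y v = y k₀)
    show y u = y k₀
    have hvi : v ≠ i := by rintro rfl; linarith
    have hterm : ∀ j ∈ Finset.univ, 0 ≤ |A v j| * (y v - y j) := fun j _ =>
      mul_nonneg (abs_nonneg _) (by linarith [hk₀ j (Finset.mem_univ j)])
    have hrow := (lapBar_mulVec_apply A y v).symm.trans (hy v hvi)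
    rcases mul_eq_zero.mp ((Finset.sum_eq_zero_iff_of_nonneg hterm).mp hrow u
      (Finset.mem_univ u)) with h | h
    · exact absurd (abs_eq_zero.mp h) huv
    · linarith
  have hi : y i = y k₀ := hsc.mem_of_backward_closed hspread (j := k₀) rfl
  linarith

theorem StronglyConnected.eq_zero_of_lapBar_mulVec_eq_zero (hsc : StronglyConnected A)
    {i : Fin n} {y : Fin n → ℝ} (hyi : y i = 0) (hy : ∀ k ≠ i, (lapBar A *ᵥ y) k = 0) :
    y = 0 := by
  funext k
  have hneg := hsc.nonpos_of_lapBar_mulVec_eq_zero (i := i) (y := -y) (by simp [hyi])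
    (fun k hk => by simp [Matrix.mulVec_neg, hy k hk]) k
  exact le_antisymm (hsc.nonpos_of_lapBar_mulVec_eq_zero hyi hy k) (by simpa using hneg)

theorem StronglyConnected.minorDet_pos (hsc : StronglyConnected A) (i : Fin n) :
    0 < minorDet A i := by
  refine Matrix.det_pos_of_sum_abs_le_diag _
    (Matrix.sum_abs_submatrix_erase_le _ (Function.Embedding.subtype _)
      (sum_abs_lapBar_erase_le A)) fun v hv => ?_
  set y : Fin n → ℝ := fun j => if h : j = i then 0 else v ⟨j, h⟩ with hy
  have hyi : y i = 0 := by simp [hy]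
  have hyv : ∀ j : {j // j ≠ i}, y j = v j := fun j => by simp [hy, j.2]
  have hLy : ∀ k ≠ i, (lapBar A *ᵥ y) k = 0 := fun k hk => by
    rw [Matrix.mulVec, dotProduct, Fintype.sum_eq_add_sum_subtype_ne _ i, hyi, mul_zero, zero_add]
    simpa [Matrix.mulVec, dotProduct, hyv] using congrFun hv ⟨k, hk⟩
  funext j
  simpa [hyv] using congrFun (hsc.eq_zero_of_lapBar_mulVec_eq_zero hyi hLy) j

theorem StronglyConnected.PhiE_summand_nonneg (hsc : StronglyConnected A) (x : Fin n → ℝ)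
    (i j : Fin n) : 0 ≤ minorDet A i * |A i j| * (x i - Real.sign (A i j) * x j) ^ 2 := by
  have := hsc.minorDet_pos i
  positivity

theorem StronglyConnected.PhiE_nonneg (hsc : StronglyConnected A) (x : Fin n → ℝ) :
    0 ≤ PhiE A x :=
  Finset.sum_nonneg fun i _ => Finset.sum_nonneg fun j _ => hsc.PhiE_summand_nonneg x i j

theorem StronglyConnected.eq_sign_mul_of_PhiE_eq_zero (hsc : StronglyConnected A)
    {x : Fin n → ℝ} (hx : PhiE A x = 0) {i j : Fin n} (hij : A i j ≠ 0) :
    x i = Real.sign (A i j) * x j := by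
  have hrow := (Finset.sum_eq_zero_iff_of_nonneg fun i _ => Finset.sum_nonneg fun j _ =>
    hsc.PhiE_summand_nonneg x i j).mp hx i (Finset.mem_univ i)
  have hterm := (Finset.sum_eq_zero_iff_of_nonneg fun j _ =>
    hsc.PhiE_summand_nonneg x i j).mp hrow j (Finset.mem_univ j)
  have hweight : minorDet A i * |A i j| ≠ 0 :=
    (mul_pos (hsc.minorDet_pos i) (abs_pos.mpr hij)).ne'
  have hsq := (mul_eq_zero.mp hterm).resolve_left hweight
  linarith [pow_eq_zero_iff two_ne_zero |>.mp hsq]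

theorem StronglyConnected.exists_eq_smul_of_PhiE_eq_zero (hsc : StronglyConnected A)
    {σ : Fin n → ℝ} (hσ : IsGauge σ) (hb : ∀ i j, 0 ≤ σ i * A i j * σ j) {x : Fin n → ℝ}
    (hx : PhiE A x = 0) :
    ∃ c : ℝ, x = c • σ := by
  rcases isEmpty_or_nonempty (Fin n) with _ | ⟨⟨i₀⟩⟩
  · exact ⟨0, Subsingleton.elim _ _⟩
  have hsq : ∀ i, σ i * σ i = 1 := fun i => by rcases hσ i with h | h <;> simp [h]
  have hedge : ∀ u v, A v u ≠ 0 → σ v * x v = σ i₀ * x i₀ → σ u * x u = σ i₀ * x i₀ := by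
    intro u v h hv
    rw [← hv, hsc.eq_sign_mul_of_PhiE_eq_zero hx h, hσ.sign_eq_mul (hb v u) h]
    linear_combination (-(σ u * x u)) * hsq v
  refine ⟨σ i₀ * x i₀, funext fun k => ?_⟩
  have hk : σ k * x k = σ i₀ * x i₀ :=
    hsc.mem_of_backward_closed (S := {u | σ u * x u = σ i₀ * x i₀}) hedge (j := i₀) rfl
  rw [Pi.smul_apply, smul_eq_mul, ← hk]
  linear_combination (-(x k)) * hsq k

end Laplacian

theorem balanced_iff_phiE_psd_general (n : ℕ)
    (A : Matrix (Fin n) (Fin n) ℝ)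
    (hsc : StronglyConnected A) :
    StructBalanced A ↔
      ((∀ x : Fin n → ℝ, 0 ≤ PhiE A x) ∧
        ∃ σ : Fin n → ℝ, IsGauge σ ∧ (∀ i j, 0 ≤ σ i * A i j * σ j) ∧
          ∀ x : Fin n → ℝ, PhiE A x = 0 → ∃ c : ℝ, x = c • σ) := by
  constructor
  · rintro ⟨σ, hσ, hb⟩
    exact ⟨hsc.PhiE_nonneg, σ, hσ, hb, fun x hx => hsc.exists_eq_smul_of_PhiE_eq_zero hσ hb hx⟩
  · rintro ⟨-, σ, hσ, hb, -⟩
    exact ⟨σ, hσ, hb⟩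

/-- `G` is structurally balanced iff `Φ_e` is positive semidefinite with
null set exactly `span{D·1_n}`. -/
theorem balanced_iff_phiE_psd (n : ℕ) (hn : 2 ≤ n)
    (A : Matrix (Fin n) (Fin n) ℝ)
    (hdiag : ∀ i, A i i = 0) (hdigon : ∀ i j, 0 ≤ A i j * A j i)
    (hsc : StronglyConnected A) :
    StructBalanced A ↔
      ((∀ x : Fin n → ℝ, 0 ≤ PhiE A x) ∧
        ∃ σ : Fin n → ℝ, IsGauge σ ∧ (∀ i j, 0 ≤ σ i * A i j * σ j) ∧
          ∀ x : Fin n → ℝ, PhiE A x = 0 → ∃ c : ℝ, x = c • σ) :=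
  balanced_iff_phiE_psd_general n A hsc
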